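/- arXiv:1311.0782 — 4 statements merged into one kernel-verified Lean document; each statement's English description precedes it below -/
import Mathlib

section
/- Let P(k,l) denote partitions of the set {1,…,k+l} viewed as k upper points and l lower points. For a partition p ∈ P(k,k), call p projective if p∘p = p and p* = p, where p* is the reflection of p and ∘ is vertical concatenation. Then a partition p ∈ P(k,k) is projective if and only if there exists a partition r ∈ P(k,k) such that r*∘r = p. -/
/-!
If `p` is projective, `r = p` works, since `p* p = p p = p`. Conversely, put `p = r* r`.
Reflection reverses composition, `(q p)* = p* q*`, so `p* = p`. In the three-row picture
of `r* r` a block joining the top row to the bottom row has to pass through a middle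
point `b`; the top–bottom symmetry of the picture then joins `b` to both `a` and `a'`,
so a top point `a` of a through-block of `p` is joined to `a'`. For a self-reflective `p` with
this property, `p p = p`: collapsing the middle row of `p p` onto the bottom row maps
its generating relation into `p`, and conversely each block of `p` is recovered in `p p`
through the pairs `c, c'`.
-/

/-- Reflection of a partition of `k` upper and `l` lower points: exchange the
roles of the two rows. -/
def sreflect {k l : ℕ} (p : Setoid (Fin k ⊕ Fin l)) : Setoid (Fin l ⊕ Fin k) :=
  Setoid.comap Sum.swap p

/-- Vertical concatenation: `p` (a partition of `k` upper and `l` lower points)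
on top, followed by `q` (a partition of `l` upper and `m` lower points): the
lower points of `p` are identified with the upper points of `q`, the join of the
two induced partitions is taken and then restricted to the `k` upper points of
`p` and the `m` lower points of `q`. -/
def scomp {k l m : ℕ} (p : Setoid (Fin k ⊕ Fin l)) (q : Setoid (Fin l ⊕ Fin m)) :
    Setoid (Fin k ⊕ Fin m) :=
  Setoid.comap (Sum.map id Sum.inr)
    (Relation.EqvGen.setoid (fun x y : Fin k ⊕ (Fin l ⊕ Fin m) =>
      (∃ a b, p.r a b ∧ Sum.map id Sum.inl a = x ∧ Sum.map id Sum.inl b = y) ∨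
      (∃ a b, q.r a b ∧ (Sum.inr a : Fin k ⊕ (Fin l ⊕ Fin m)) = x ∧ Sum.inr b = y)))

open Relation

variable {k l m : ℕ}

/-- The relation generating `scomp p q`. -/
def scompGen (p : Setoid (Fin k ⊕ Fin l)) (q : Setoid (Fin l ⊕ Fin m))
    (x y : Fin k ⊕ (Fin l ⊕ Fin m)) : Prop :=
  (∃ a b, p.r a b ∧ Sum.map id Sum.inl a = x ∧ Sum.map id Sum.inl b = y) ∨
    (∃ a b, q.r a b ∧ (Sum.inr a : Fin k ⊕ (Fin l ⊕ Fin m)) = x ∧ Sum.inr b = y)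

theorem Relation.EqvGen.setoid_map {α β : Type*} {r : α → α → Prop} {s : Setoid β}
    (f : α → β) (hf : ∀ x y, r x y → s.r (f x) (f y)) {x y : α} (hxy : EqvGen r x y) :
    s.r (f x) (f y) :=
  Setoid.eqvGen_le (s := s.comap f) hf hxy

theorem sreflect_r_iff (p : Setoid (Fin k ⊕ Fin l)) (x y : Fin l ⊕ Fin k) :
    (sreflect p).r x y ↔ p.r x.swap y.swap :=
  Iff.rfl

theorem sreflect_sreflect (p : Setoid (Fin k ⊕ Fin l)) : sreflect (sreflect p) = p :=
  Setoid.ext fun x y => by rw [sreflect_r_iff, sreflect_r_iff, Sum.swap_swap, Sum.swap_swap]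

theorem sreflect_r_swap {p : Setoid (Fin k ⊕ Fin k)} (hp : sreflect p = p) {x y : Fin k ⊕ Fin k}
    (h : p.r x y) : p.r x.swap y.swap := by
  rw [← hp, sreflect_r_iff, Sum.swap_swap, Sum.swap_swap]
  exact h

def rowSwap : Fin k ⊕ (Fin l ⊕ Fin m) → Fin m ⊕ (Fin l ⊕ Fin k)
  | .inl a => .inr (.inr a)
  | .inr (.inl b) => .inr (.inl b)
  | .inr (.inr c) => .inl c

theorem rowSwap_outer (x : Fin k ⊕ Fin m) :
    rowSwap (Sum.map id Sum.inr x : Fin k ⊕ (Fin l ⊕ Fin m)) = Sum.map id Sum.inr x.swap := by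
  rcases x with a | c <;> rfl

theorem scompGen_rowSwap {p : Setoid (Fin k ⊕ Fin l)} {q : Setoid (Fin l ⊕ Fin m)}
    {x y : Fin k ⊕ (Fin l ⊕ Fin m)} (h : scompGen p q x y) :
    scompGen (sreflect q) (sreflect p) (rowSwap x) (rowSwap y) := by
  rcases h with ⟨a, b, hab, rfl, rfl⟩ | ⟨a, b, hab, rfl, rfl⟩
  · refine Or.inr ⟨a.swap, b.swap, ?_, ?_, ?_⟩
    · rwa [sreflect_r_iff, Sum.swap_swap, Sum.swap_swap]
    · rcases a with _ | _ <;> rfl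
    · rcases b with _ | _ <;> rfl
  · refine Or.inl ⟨a.swap, b.swap, by rwa [sreflect_r_iff, Sum.swap_swap, Sum.swap_swap], ?_, ?_⟩
    · rcases a with _ | _ <;> rfl
    · rcases b with _ | _ <;> rfl

theorem eqvGen_scompGen_rowSwap {p : Setoid (Fin k ⊕ Fin l)} {q : Setoid (Fin l ⊕ Fin m)}
    {x y : Fin k ⊕ (Fin l ⊕ Fin m)} (h : EqvGen (scompGen p q) x y) :
    EqvGen (scompGen (sreflect q) (sreflect p)) (rowSwap x) (rowSwap y) :=
  h.setoid_map (s := EqvGen.setoid _) rowSwap fun _ _ hxy => .rel _ _ (scompGen_rowSwap hxy)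

theorem sreflect_scomp (p : Setoid (Fin k ⊕ Fin l)) (q : Setoid (Fin l ⊕ Fin m)) :
    sreflect (scomp p q) = scomp (sreflect q) (sreflect p) := by
  refine le_antisymm (fun x y h => ?_) (fun x y h => ?_)
  · have h' := eqvGen_scompGen_rowSwap h
    rwa [rowSwap_outer, rowSwap_outer, Sum.swap_swap, Sum.swap_swap] at h'
  · have h' := eqvGen_scompGen_rowSwap h
    rwa [rowSwap_outer, rowSwap_outer, sreflect_sreflect, sreflect_sreflect] at h'

theorem sreflect_scomp_sreflect (r : Setoid (Fin k ⊕ Fin l)) :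
    sreflect (scomp r (sreflect r)) = scomp r (sreflect r) := by
  rw [sreflect_scomp, sreflect_sreflect]

theorem exists_middle_of_isLeft_ne {p : Setoid (Fin k ⊕ Fin l)} {q : Setoid (Fin l ⊕ Fin m)}
    {x y : Fin k ⊕ (Fin l ⊕ Fin m)} (h : EqvGen (scompGen p q) x y) (hxy : x.isLeft ≠ y.isLeft) :
    ∃ b, EqvGen (scompGen p q) x (.inr (.inl b)) := by
  induction h with
  | rel x y hgen =>
    rcases hgen with ⟨a | a, b | b, hab, rfl, rfl⟩ | ⟨a, b, hab, rfl, rfl⟩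
    · exact absurd rfl hxy
    · exact ⟨b, .rel _ _ (Or.inl ⟨_, _, hab, rfl, rfl⟩)⟩
    · exact ⟨a, .refl _⟩
    · exact ⟨a, .refl _⟩
    · exact absurd rfl hxy
  | refl => exact absurd rfl hxy
  | symm x y hxy' ih =>
    obtain ⟨b, hb⟩ := ih (Ne.symm hxy)
    exact ⟨b, .trans _ _ _ (.symm _ _ hxy') hb⟩
  | trans x y z hxy' _ ih₁ ih₂ =>
    by_cases hxy₁ : x.isLeft = y.isLeft
    · obtain ⟨b, hb⟩ := ih₂ (hxy₁ ▸ hxy)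
      exact ⟨b, .trans _ _ _ hxy' hb⟩
    · exact ih₁ hxy₁

theorem scomp_sreflect_r_inl_inr_self (r : Setoid (Fin k ⊕ Fin l)) {a c : Fin k}
    (h : (scomp r (sreflect r)).r (.inl a) (.inr c)) :
    (scomp r (sreflect r)).r (.inl a) (.inr a) := by
  obtain ⟨b, hb⟩ := exists_middle_of_isLeft_ne h (by simp)
  -- `rowSwap` fixes the middle point `b` and moves the top point `a` to the bottom point `a'`.
  have hb' := eqvGen_scompGen_rowSwap hb
  rw [sreflect_sreflect] at hb'
  exact .trans _ _ _ hb (.symm _ _ hb')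

section Idempotent

variable {p : Setoid (Fin k ⊕ Fin k)} (hp : sreflect p = p)
  (hthrough : ∀ a c, p.r (.inl a) (.inr c) → p.r (.inl a) (.inr a))
include hp hthrough

theorem r_inl_inr_self_of_r_inl_inr {a c : Fin k} (h : p.r (.inl a) (.inr c)) :
    p.r (.inl c) (.inr c) :=
  hthrough c a (p.symm (sreflect_r_swap hp h))

theorem scomp_self_le : scomp p p ≤ p := by
  let collapse : Fin k ⊕ (Fin k ⊕ Fin k) → Fin k ⊕ Fin k := Sum.elim .inl (Sum.elim .inr .inr)
  have hgen : ∀ u v, scompGen p p u v → p.r (collapse u) (collapse v) := by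
    rintro _ _ (⟨a | a, b | b, hab, rfl, rfl⟩ | ⟨a | a, b | b, hab, rfl, rfl⟩)
    all_goals first
      | exact hab
      | exact sreflect_r_swap hp hab
      | exact p.trans (p.symm (hthrough _ _ hab)) hab
      | exact p.trans hab (hthrough _ _ (p.symm hab))
  intro x y h
  have := EqvGen.setoid_map collapse hgen h
  rcases x with _ | _ <;> rcases y with _ | _ <;> exact this

theorem le_scomp_self : p ≤ scomp p p := by
  have upper {x y} (h : p.r x y) : EqvGen (scompGen p p) (Sum.map id .inl x) (Sum.map id .inl y) :=
    .rel _ _ (.inl ⟨x, y, h, rfl, rfl⟩)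
  have lower {x y} (h : p.r x y) : EqvGen (scompGen p p) (.inr x) (.inr y) :=
    .rel _ _ (.inr ⟨x, y, h, rfl, rfl⟩)
  have cross {a c} (h : p.r (.inl a) (.inr c)) :
      EqvGen (scompGen p p) (.inl a) (.inr (.inr c)) :=
    .trans _ _ _ (upper h) (lower (r_inl_inr_self_of_r_inl_inr hp hthrough h))
  rintro (a | c) (a' | c') h
  · exact upper h
  · exact cross h
  · exact .symm _ _ (cross (p.symm h))
  · exact lower h

theorem scomp_self_eq_of_sreflect_eq : scomp p p = p :=
  le_antisymm (scomp_self_le hp hthrough) (le_scomp_self hp hthrough)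

end Idempotent

/-- a partition `p ∈ P(k,k)` is projective (`pp = p` and `p* = p`)
if and only if `p = r*r` for some partition `r ∈ P(k,k)`. -/
theorem projective_iff_exists_rstar_r (k : ℕ) (p : Setoid (Fin k ⊕ Fin k)) :
    (scomp p p = p ∧ sreflect p = p) ↔
      ∃ r : Setoid (Fin k ⊕ Fin k), scomp r (sreflect r) = p := by
  constructor
  · rintro ⟨hpp, hp⟩
    exact ⟨p, by rw [hp, hpp]⟩
  · rintro ⟨r, rfl⟩
    have hp := sreflect_scomp_sreflect r
    exact ⟨scomp_self_eq_of_sreflect_eq hp fun _ _ => scomp_sreflect_r_inl_inr_self r, hp⟩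
end

section
/- Let C be a category of noncrossing colored partitions. For a word w of colors, let Proj(w) be the set of projective partitions in C with upper coloring w, let ∼ be the equivalence relation p ∼ q iff there exists r ∈ C with r*r = p and rr* = q, and let n_w(p) be the cardinality of the equivalence class of p in Proj(w). Then the cardinality of C(w,w) (partitions in C with upper and lower coloring w) equals Σ_p n_w(p)², the sum running over a set of representatives of the equivalence classes in Proj(w). -/
open scoped Classical

/-- A two-colored partition with `k` upper and `l` lower points; `true` = white. -/
structure CPartition where
  k : ℕ
  l : ℕ
  uc : Fin k → Bool
  lc : Fin l → Bool
  rel : Setoid (Fin k ⊕ Fin l)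

namespace CPartition

/-- The disjoint union of two setoids. -/
def sumSetoid {X Y : Type*} (p : Setoid X) (q : Setoid Y) : Setoid (X ⊕ Y) where
  r := Sum.LiftRel p.r q.r
  iseqv := by
    refine ⟨fun x => ?_, fun h => ?_, fun h h' => ?_⟩
    · cases x with
      | inl a => exact Sum.LiftRel.inl (p.iseqv.refl a)
      | inr b => exact Sum.LiftRel.inr (q.iseqv.refl b)
    · cases h with
      | inl h => exact Sum.LiftRel.inl (p.iseqv.symm h)
      | inr h => exact Sum.LiftRel.inr (q.iseqv.symm h)
    · cases h with
      | inl h =>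
        cases h' with
        | inl h' => exact Sum.LiftRel.inl (p.iseqv.trans h h')
      | inr h =>
        cases h' with
        | inr h' => exact Sum.LiftRel.inr (q.iseqv.trans h h')

/-- Horizontal concatenation `p ⊗ q`. -/
def tensor (p q : CPartition) : CPartition where
  k := p.k + q.k
  l := p.l + q.l
  uc := fun i => Sum.elim p.uc q.uc (finSumFinEquiv.symm i)
  lc := fun j => Sum.elim p.lc q.lc (finSumFinEquiv.symm j)
  rel := Setoid.comap
    (fun x => Equiv.sumSumSumComm (Fin p.k) (Fin q.k) (Fin p.l) (Fin q.l)
      (Sum.map (fun i => finSumFinEquiv.symm i) (fun j => finSumFinEquiv.symm j) x))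
    (sumSetoid p.rel q.rel)

/-- Reflection `p*` (exchange the two rows, keeping colors). -/
def reflect (p : CPartition) : CPartition where
  k := p.l
  l := p.k
  uc := p.lc
  lc := p.uc
  rel := Setoid.comap Sum.swap p.rel

/-- The conjugate partition `p̄` : rotate all upper points to the lower row and
conversely (order is reversed and colors are switched). -/
def conj (p : CPartition) : CPartition where
  k := p.l
  l := p.k
  uc := fun i => !(p.lc i.rev)
  lc := fun j => !(p.uc j.rev)
  rel := Setoid.comap
    (Sum.elim (fun i => Sum.inr i.rev) (fun j => Sum.inl j.rev)) p.rel

/-- Vertical concatenation: `p` on top, then `q` below (requires `p.l = q.k`).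
Points of the middle row are identified and removed, blocks being joined along them. -/
def vcomp (p q : CPartition) (h : p.l = q.k) : CPartition where
  k := p.k
  l := q.l
  uc := p.uc
  lc := q.lc
  rel := Setoid.comap (Sum.map id Sum.inr)
    (Relation.EqvGen.setoid (fun x y : Fin p.k ⊕ (Fin p.l ⊕ Fin q.l) =>
      (∃ a b, p.rel.r a b ∧ Sum.map id Sum.inl a = x ∧ Sum.map id Sum.inl b = y) ∨
      (∃ a b, q.rel.r a b ∧
        Sum.inr (Sum.map (Fin.cast h.symm) id a) = x ∧
        Sum.inr (Sum.map (Fin.cast h.symm) id b) = y)))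

/-- Rotation: move the leftmost upper point to the leftmost lower position,
switching its color. -/
def rotDown (p : CPartition) (m : ℕ) (h : p.k = m + 1) : CPartition where
  k := m
  l := p.l + 1
  uc := fun i => p.uc (Fin.cast h.symm i.succ)
  lc := fun j => Fin.cases (!(p.uc (Fin.cast h.symm 0))) p.lc j
  rel := Setoid.comap
    (Sum.elim (fun i => Sum.inl (Fin.cast h.symm i.succ))
      (fun j => Fin.cases (Sum.inl (Fin.cast h.symm (0 : Fin (m + 1))))
        (fun j' => Sum.inr j') j)) p.rel

/-- Rotation: move the leftmost lower point to the leftmost upper position,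
switching its color. -/
def rotUp (p : CPartition) (m : ℕ) (h : p.l = m + 1) : CPartition where
  k := p.k + 1
  l := m
  uc := fun i => Fin.cases (!(p.lc (Fin.cast h.symm 0))) p.uc i
  lc := fun j => p.lc (Fin.cast h.symm j.succ)
  rel := Setoid.comap
    (Sum.elim (fun i => Fin.cases (Sum.inr (Fin.cast h.symm (0 : Fin (m + 1))))
        (fun i' => Sum.inl i') i)
      (fun j => Sum.inr (Fin.cast h.symm j.succ))) p.rel

/-- The identity partition with coloring `c`. -/
def idPart {n : ℕ} (c : Fin n → Bool) : CPartition where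
  k := n
  l := n
  uc := c
  lc := c
  rel := Setoid.ker (Sum.elim id id)

/-- A block (class) of `p` is a through-block when it contains both an upper
and a lower point. -/
def IsThrough (p : CPartition) (c : Quotient p.rel) : Prop :=
  (∃ i : Fin p.k, Quotient.mk p.rel (Sum.inl i) = c) ∧
    (∃ j : Fin p.l, Quotient.mk p.rel (Sum.inr j) = c)

/-- The number `t(p)` of through-blocks of `p`. -/
noncomputable def t (p : CPartition) : ℕ := Nat.card {c : Quotient p.rel // p.IsThrough c}

/-- A projective partition: `pp = p = p*`. -/
def IsProjective (p : CPartition) : Prop :=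
  ∃ h : p.l = p.k, vcomp p p h = p ∧ reflect p = p

/-- Equivalence of projective partitions in `C` : `p ∼ q` iff `r*r = p`, `rr* = q`
for some `r ∈ C`. -/
def EquivIn (C : Set CPartition) (p q : CPartition) : Prop :=
  ∃ r ∈ C, vcomp r (reflect r) rfl = p ∧ vcomp (reflect r) r rfl = q

/-- Position of a point in the counterclockwise planar order. -/
def ptIdx (p : CPartition) : Fin p.k ⊕ Fin p.l → ℕ :=
  Sum.elim (fun i => (i : ℕ)) (fun j => p.k + (p.l - 1 - (j : ℕ)))

/-- A partition is noncrossing when its strings can be drawn without crossings. -/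
def NonCrossing (p : CPartition) : Prop :=
  ∀ a b c d : Fin p.k ⊕ Fin p.l,
    p.ptIdx a < p.ptIdx b → p.ptIdx b < p.ptIdx c → p.ptIdx c < p.ptIdx d →
    p.rel.r a c → p.rel.r b d → p.rel.r a b

/-- The one-block projective partition on `k + k` points, all colored `c`. -/
def piP (k : ℕ) (c : Bool) : CPartition :=
  ⟨k, k, fun _ => c, fun _ => c, ⊤⟩

/-- `π_k` for `k ∈ ℤ \ {0}` : one block, `|k| + |k|` points, white if `k > 0`,
black if `k < 0`. -/
def piZ (k : ℤ) : CPartition := piP k.natAbs (decide (0 < k))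

/-- `π_{0⁺}`, the one-block projective partition with rows colored white–black. -/
def pi0plus : CPartition :=
  ⟨2, 2, ![true, false], ![true, false], ⊤⟩

/-- `θ_k` : one block of `k` points of color `c` on one row. -/
def thetaP (k : ℕ) (c : Bool) : CPartition :=
  ⟨k, 0, fun _ => c, Fin.elim0, ⊤⟩

/-- `β_k = θ_k* θ_k` : one upper block and one lower block of `k` points each,
all of color `c`. -/
def betaP (k : ℕ) (c : Bool) : CPartition :=
  ⟨k, k, fun _ => c, fun _ => c, sumSetoid ⊤ ⊤⟩

/-- `β_k` for `k : ℤ` (white if `k > 0`, black if `k < 0`, empty if `k = 0`). -/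
def betaZ (k : ℤ) : CPartition := betaP k.natAbs (decide (0 < k))

/-- Tensor powers, `tpow p 0` being the empty partition. -/
def tpow (p : CPartition) : ℕ → CPartition
  | 0 => betaP 0 true
  | m + 1 => tensor (tpow p m) p

end CPartition

open CPartition

/-- A category of two-colored partitions: a class of partitions containing the
white identity and stable under horizontal concatenation, vertical concatenation
(when the colorings match), reflection and rotations. -/
structure PartitionCategory where
  mem : Set CPartition
  id_mem : idPart (fun _ : Fin 1 => true) ∈ mem
  tensor_mem : ∀ p q, p ∈ mem → q ∈ mem → tensor p q ∈ mem
  vcomp_mem : ∀ p q (h : p.l = q.k), p ∈ mem → q ∈ mem →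
    (∀ j, p.lc j = q.uc (Fin.cast h j)) → vcomp p q h ∈ mem
  reflect_mem : ∀ p, p ∈ mem → reflect p ∈ mem
  rotDown_mem : ∀ p, p ∈ mem → ∀ m (h : p.k = m + 1), rotDown p m h ∈ mem
  rotUp_mem : ∀ p, p ∈ mem → ∀ m (h : p.l = m + 1), rotUp p m h ∈ mem

/-- The set of partitions of `C` with upper and lower colorings both `w`. -/
def OfColors (C : Set CPartition) (n : ℕ) (w : Fin n → Bool) : Set CPartition :=
  {p | p ∈ C ∧ ∃ hk : p.k = n, ∃ hl : p.l = n,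
    (∀ i, p.uc i = w (Fin.cast hk i)) ∧ (∀ j, p.lc j = w (Fin.cast hl j))}

/-- The set `Proj(w)` of projective partitions of `C` with coloring `w`. -/
def ProjW (C : Set CPartition) (n : ℕ) (w : Fin n → Bool) : Set CPartition :=
  {p | p ∈ OfColors C n w ∧ p.IsProjective}

/-!
The map `r ↦ (r*r, rr*)` is a bijection from `C(w,w)` onto the pairs of equivalent partitions
of `Proj(w)`; counting these pairs class by class gives `Σ n_w(p)²`. Surjectivity is the
definition of `∼`. For injectivity, `r*r` remembers the colors and blocks of the upper row of
`r` and which upper points lie on through-blocks, `rr*` the same for the lower row, and a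
noncrossing partition is determined by these data since its through-blocks join the two rows in
order. That `∼` is transitive comes from composing: if `r₁r₁* = r₂*r₂`, then `r₁` on top of `r₂`
has the upper data of `r₁` and the lower data of `r₂`.
-/

theorem Setoid.ext_sum {α β : Type*} {R S : Setoid (α ⊕ β)}
    (hll : ∀ a a', R (.inl a) (.inl a') ↔ S (.inl a) (.inl a'))
    (hlr : ∀ a b, R (.inl a) (.inr b) ↔ S (.inl a) (.inr b))
    (hrr : ∀ b b', R (.inr b) (.inr b') ↔ S (.inr b) (.inr b')) : R = S := by
  ext (a | b) (a' | b')
  · exact hll a a'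
  · exact hlr a b'
  · exact R.comm'.trans ((hlr a' b).trans S.comm')
  · exact hrr b b'

theorem Set.Finite.card_rel_pairs_eq_sum_sq {α : Type*} {P : Set α} (hP : P.Finite)
    {r : α → α → Prop} (symm : ∀ {x y}, r x y → r y x)
    (trans : ∀ {x y z}, r x y → r y z → r x z) (E : Finset α)
    (hE : ∀ x ∈ P, ∃! e, e ∈ E ∧ r x e) :
    Nat.card {x : α × α // x.1 ∈ P ∧ x.2 ∈ P ∧ r x.1 x.2} =
      ∑ e ∈ E, Nat.card {x // x ∈ P ∧ r x e} ^ 2 := by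
  choose rep hrep using fun x (hx : x ∈ P) => (hE x hx).exists
  let F (e : α) := {x // x ∈ P ∧ r x e}
  have : ∀ e, Finite (F e) := fun e => (hP.subset fun _ hx => hx.1).to_subtype
  let Φ (x : {x : α × α // x.1 ∈ P ∧ x.2 ∈ P ∧ r x.1 x.2}) : (e : E) × (F e × F e) :=
    ⟨⟨rep _ x.2.1, (hrep _ x.2.1).1⟩, ⟨x.1.1, x.2.1, (hrep _ x.2.1).2⟩,
      ⟨x.1.2, x.2.2.1, trans (symm x.2.2.2) (hrep _ x.2.1).2⟩⟩
  have hΦ : Function.Bijective Φ := by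
    refine ⟨fun x y hxy => ?_, ?_⟩
    · have h₁ := congrArg (fun t => t.2.1.1) hxy
      have h₂ := congrArg (fun t => t.2.2.1) hxy
      exact Subtype.ext (Prod.ext h₁ h₂)
    · rintro ⟨⟨e, he⟩, ⟨x, hx, hxe⟩, ⟨y, hy, hye⟩⟩
      obtain rfl : e = rep x hx := (hE x hx).unique ⟨he, hxe⟩ (hrep x hx)
      exact ⟨⟨(x, y), hx, hy, trans hxe (symm hye)⟩, rfl⟩
  rw [Nat.card_congr (Equiv.ofBijective Φ hΦ), Nat.card_sigma, ← Finset.sum_coe_sort E]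
  simp only [F, Nat.card_prod, sq]

namespace CPartition

open Sum

theorem rel_iff_of_eq {p q : CPartition} (h : p = q) (x y : Fin p.k ⊕ Fin p.l) :
    p.rel x y ↔ q.rel (x.map (Fin.cast (congrArg k h)) (Fin.cast (congrArg l h)))
      (y.map (Fin.cast (congrArg k h)) (Fin.cast (congrArg l h))) := by
  subst h
  cases x <;> cases y <;> rfl

theorem eq_of_rel_cast {p q : CPartition} (hk : p.k = q.k) (hl : p.l = q.l)
    (huc : ∀ i, p.uc i = q.uc (Fin.cast hk i)) (hlc : ∀ j, p.lc j = q.lc (Fin.cast hl j))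
    (hll : ∀ i i', p.rel (inl i) (inl i') ↔ q.rel (inl (Fin.cast hk i)) (inl (Fin.cast hk i')))
    (hlr : ∀ i j, p.rel (inl i) (inr j) ↔ q.rel (inl (Fin.cast hk i)) (inr (Fin.cast hl j)))
    (hrr : ∀ j j', p.rel (inr j) (inr j') ↔ q.rel (inr (Fin.cast hl j)) (inr (Fin.cast hl j'))) :
    p = q := by
  obtain ⟨k, l, uc, lc, R⟩ := p
  obtain ⟨k', l', uc', lc', S⟩ := q
  dsimp only at hk hl
  subst hk hl
  simp only [Fin.cast_eq_self] at huc hlc hll hlr hrr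
  obtain rfl := funext huc
  obtain rfl := funext hlc
  obtain rfl := Setoid.ext_sum hll hlr hrr
  rfl

theorem uc_eq_of_eq {p q : CPartition} (h : p = q) (i : Fin p.k) :
    p.uc i = q.uc (Fin.cast (congrArg k h) i) := by
  subst h
  rfl

theorem vcomp_congr {p p' q q' : CPartition} (hp : p = p') (hq : q = q') {h : p.l = q.k}
    {h' : p'.l = q'.k} : vcomp p q h = vcomp p' q' h' := by
  subst hp hq
  rfl

theorem reflect_reflect (p : CPartition) : reflect (reflect p) = p :=
  congrArg (CPartition.mk p.k p.l p.uc p.lc) <| Setoid.ext fun x y => by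
    cases x <;> cases y <;> rfl

section vcomp

variable (p q : CPartition) (h : p.l = q.k)

def AgreeOnMiddle : Prop :=
  ∀ m m', p.rel (inr m) (inr m') ↔ q.rel (inl (Fin.cast h m)) (inl (Fin.cast h m'))

def Joined (u : Fin p.k ⊕ Fin p.l) (c : Fin q.l) : Prop :=
  ∃ m, p.rel u (inr m) ∧ q.rel (inl (Fin.cast h m)) (inr c)

/-- The relation of `vcomp p q h`, extended to the middle row, which is read as the lower
row of `p`. -/
def GluedRel : (Fin p.k ⊕ Fin p.l) ⊕ Fin q.l → (Fin p.k ⊕ Fin p.l) ⊕ Fin q.l → Prop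
  | inl u, inl v => p.rel u v
  | inl u, inr c => Joined p q h u c
  | inr c, inl v => Joined p q h v c
  | inr c, inr c' => q.rel (inr c) (inr c')

variable {p q h}

theorem Joined.of_rel_left {u v c} (huv : p.rel u v) (hv : Joined p q h v c) :
    Joined p q h u c :=
  let ⟨m, hvm, hmc⟩ := hv
  ⟨m, p.rel.trans' huv hvm, hmc⟩

theorem Joined.of_rel_right {u c c'} (hu : Joined p q h u c) (hcc : q.rel (inr c) (inr c')) :
    Joined p q h u c' :=
  let ⟨m, hum, hmc⟩ := hu
  ⟨m, hum, q.rel.trans' hmc hcc⟩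

theorem Joined.rel_left (hmid : AgreeOnMiddle p q h) {u v c} (hu : Joined p q h u c)
    (hv : Joined p q h v c) : p.rel u v :=
  let ⟨m, hum, hmc⟩ := hu
  let ⟨m', hvm', hm'c⟩ := hv
  p.rel.trans' hum <| p.rel.trans' ((hmid m m').2 (q.rel.trans' hmc (q.rel.symm' hm'c)))
    (p.rel.symm' hvm')

theorem Joined.rel_right (hmid : AgreeOnMiddle p q h) {u c c'} (hc : Joined p q h u c)
    (hc' : Joined p q h u c') : q.rel (inr c) (inr c') :=
  let ⟨m, hum, hmc⟩ := hc
  let ⟨m', hum', hm'c'⟩ := hc'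
  q.rel.trans' (q.rel.symm' hmc) <| q.rel.trans'
    ((hmid m m').1 (p.rel.trans' (p.rel.symm' hum) hum')) hm'c'

def gluedSetoid (hmid : AgreeOnMiddle p q h) : Setoid ((Fin p.k ⊕ Fin p.l) ⊕ Fin q.l) where
  r := GluedRel p q h
  iseqv := by
    refine ⟨fun x => ?_, fun {x y} hxy => ?_, fun {x y z} hxy hyz => ?_⟩
    · rcases x with u | c
      exacts [p.rel.refl' u, q.rel.refl' (inr c)]
    · rcases x with u | c <;> rcases y with v | c'
      exacts [p.rel.symm' hxy, hxy, hxy, q.rel.symm' hxy]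
    · rcases x with u | c <;> rcases y with v | c' <;> rcases z with w | c''
      · exact p.rel.trans' hxy hyz
      · exact hyz.of_rel_left hxy
      · exact hxy.rel_left hmid hyz
      · exact hxy.of_rel_right hyz
      · exact hxy.of_rel_left (p.rel.symm' hyz)
      · exact hxy.rel_right hmid hyz
      · exact hyz.of_rel_right (q.rel.symm' hxy)
      · exact q.rel.trans' hxy hyz

/-- Reassociated, `GluedRel` is an equivalence relation containing the generators of
`vcomp p q h`, and each of its pairs of upper or lower points is a chain of at most two
generators. -/
theorem vcomp_rel_iff (hmid : AgreeOnMiddle p q h) (x y : Fin p.k ⊕ Fin q.l) :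
    (vcomp p q h).rel x y ↔ GluedRel p q h (x.map inl id) (y.map inl id) := by
  constructor
  · intro hxy
    have := Setoid.eqvGen_le (s := (gluedSetoid hmid).comap (Equiv.sumAssoc _ _ _).symm)
      ?_ hxy
    · cases x <;> cases y <;> exact this
    rintro a b (⟨u, v, huv, rfl, rfl⟩ | ⟨u, v, huv, rfl, rfl⟩)
    · cases u <;> cases v <;> exact huv
    · rcases u with a | c <;> rcases v with b | c'
      · exact (hmid _ _).2 huv
      · exact ⟨_, p.rel.refl' _, huv⟩
      · exact ⟨_, p.rel.refl' _, q.rel.symm' huv⟩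
      · exact huv
  · have joined : ∀ i c, Joined p q h (inl i) c → (vcomp p q h).rel (inl i) (inr c) :=
      fun i c ⟨m, him, hmc⟩ => Relation.EqvGen.trans _ (inr (inl m)) _
        (.rel _ _ (.inl ⟨inl i, inr m, him, rfl, rfl⟩))
        (.rel _ _ (.inr ⟨inl (Fin.cast h m), inr c, hmc, rfl, rfl⟩))
    rcases x with i | c <;> rcases y with j | c' <;> intro hxy
    · exact Relation.EqvGen.rel _ _ (.inl ⟨inl i, inl j, hxy, rfl, rfl⟩)
    · exact joined i c' hxy
    · exact (vcomp p q h).rel.symm' (joined j c hxy)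
    · exact Relation.EqvGen.rel _ _ (.inr ⟨inr c, inr c', hxy, rfl, rfl⟩)

variable (hmid : AgreeOnMiddle p q h)
include hmid

theorem vcomp_rel_inl_inl (i j : Fin p.k) :
    (vcomp p q h).rel (inl i) (inl j) ↔ p.rel (inl i) (inl j) :=
  vcomp_rel_iff hmid (inl i) (inl j)

theorem vcomp_rel_inl_inr (i : Fin p.k) (c : Fin q.l) :
    (vcomp p q h).rel (inl i) (inr c) ↔ Joined p q h (inl i) c :=
  vcomp_rel_iff hmid (inl i) (inr c)

theorem vcomp_rel_inr_inr (c c' : Fin q.l) :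
    (vcomp p q h).rel (inr c) (inr c') ↔ q.rel (inr c) (inr c') :=
  vcomp_rel_iff hmid (inr c) (inr c')

end vcomp

/-- `vcomp r r*`, written `r*r` in `EquivIn`. -/
def upperProj (r : CPartition) : CPartition := vcomp r (reflect r) rfl

/-- `vcomp r* r`, written `rr*` in `EquivIn`. -/
def lowerProj (r : CPartition) : CPartition := vcomp (reflect r) r rfl

section upperProj

variable {r s : CPartition}

theorem agreeOnMiddle_reflect (r : CPartition) : AgreeOnMiddle r (reflect r) rfl :=
  fun _ _ => Iff.rfl

theorem upperProj_rel_inl_inl (r : CPartition) (i j : Fin r.k) :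
    (upperProj r).rel (inl i) (inl j) ↔ r.rel (inl i) (inl j) :=
  vcomp_rel_inl_inl (agreeOnMiddle_reflect r) i j

theorem upperProj_rel_inr_inr (r : CPartition) (i j : Fin r.k) :
    (upperProj r).rel (inr i) (inr j) ↔ r.rel (inl i) (inl j) :=
  vcomp_rel_inr_inr (agreeOnMiddle_reflect r) i j

theorem upperProj_rel_inl_inr (r : CPartition) (i j : Fin r.k) :
    (upperProj r).rel (inl i) (inr j) ↔ r.rel (inl i) (inl j) ∧ ∃ a, r.rel (inl i) (inr a) := by
  refine (vcomp_rel_inl_inr (agreeOnMiddle_reflect r) i j).trans ⟨?_, ?_⟩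
  · rintro ⟨a, hia, haj⟩
    exact ⟨r.rel.trans' hia haj, a, hia⟩
  · rintro ⟨hij, a, hia⟩
    exact ⟨a, hia, r.rel.trans' (r.rel.symm' hia) hij⟩

theorem upperProj_rel_inl_inr_self (r : CPartition) (i : Fin r.k) :
    (upperProj r).rel (inl i) (inr i) ↔ ∃ a, r.rel (inl i) (inr a) :=
  (upperProj_rel_inl_inr r i i).trans (and_iff_right (r.rel.refl' _))

theorem reflect_upperProj (r : CPartition) : reflect (upperProj r) = upperProj r := by
  have key : (reflect (upperProj r)).rel = (upperProj r).rel := by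
    refine Setoid.ext_sum (fun i j => ?_) (fun i j => ?_) (fun i j => ?_)
    · exact (upperProj_rel_inr_inr r i j).trans (upperProj_rel_inl_inl r i j).symm
    · refine (upperProj r).rel.comm'.trans <| (upperProj_rel_inl_inr r j i).trans <|
        Iff.trans ?_ (upperProj_rel_inl_inr r i j).symm
      exact ⟨fun ⟨hji, a, hja⟩ => ⟨r.rel.symm' hji, a, r.rel.trans' (r.rel.symm' hji) hja⟩,
        fun ⟨hij, a, hia⟩ => ⟨r.rel.symm' hij, a, r.rel.trans' (r.rel.symm' hij) hia⟩⟩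
    · exact (upperProj_rel_inl_inl r i j).trans (upperProj_rel_inr_inr r i j).symm
  exact congrArg (CPartition.mk r.k r.k r.uc r.uc) key

theorem upperProj_eq_upperProj_iff : upperProj r = upperProj s ↔
    ∃ hk : r.k = s.k, (∀ i, r.uc i = s.uc (Fin.cast hk i)) ∧
      (∀ i j, r.rel (inl i) (inl j) ↔ s.rel (inl (Fin.cast hk i)) (inl (Fin.cast hk j))) ∧
      ∀ i, (∃ a, r.rel (inl i) (inr a)) ↔ ∃ b, s.rel (inl (Fin.cast hk i)) (inr b) := by
  constructor
  · intro h
    refine ⟨(congrArg k h :), uc_eq_of_eq h, fun i j => ?_, fun i => ?_⟩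
    · rw [← upperProj_rel_inl_inl, ← upperProj_rel_inl_inl]
      exact rel_iff_of_eq h (inl i) (inl j)
    · rw [← upperProj_rel_inl_inr_self, ← upperProj_rel_inl_inr_self]
      exact rel_iff_of_eq h (inl i) (inr i)
  · rintro ⟨hk, huc, hU, hT⟩
    refine eq_of_rel_cast hk hk huc huc (fun i j => ?_) (fun i j => ?_) (fun i j => ?_)
    · exact (upperProj_rel_inl_inl r i j).trans
        ((hU i j).trans (upperProj_rel_inl_inl s _ _).symm)
    · exact (upperProj_rel_inl_inr r i j).trans
        ((and_congr (hU i j) (hT i)).trans (upperProj_rel_inl_inr s _ _).symm)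
    · exact (upperProj_rel_inr_inr r i j).trans
        ((hU i j).trans (upperProj_rel_inr_inr s _ _).symm)

theorem upperProj_upperProj (r : CPartition) : upperProj (upperProj r) = upperProj r :=
  upperProj_eq_upperProj_iff.2 ⟨rfl, fun _ => rfl, upperProj_rel_inl_inl r, fun i =>
    ⟨fun ⟨j, hij⟩ => ((upperProj_rel_inl_inr r i j).1 hij).2,
      fun hi => ⟨i, (upperProj_rel_inl_inr_self r i).2 hi⟩⟩⟩

theorem upperProj_isProjective (r : CPartition) : (upperProj r).IsProjective :=
  ⟨rfl, (vcomp_congr rfl (reflect_upperProj r).symm).trans (upperProj_upperProj r),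
    reflect_upperProj r⟩

theorem lowerProj_eq_upperProj_reflect (r : CPartition) : lowerProj r = upperProj (reflect r) :=
  vcomp_congr rfl (reflect_reflect r).symm

theorem lowerProj_eq_lowerProj_iff : lowerProj r = lowerProj s ↔
    ∃ hl : r.l = s.l, (∀ j, r.lc j = s.lc (Fin.cast hl j)) ∧
      (∀ a b, r.rel (inr a) (inr b) ↔ s.rel (inr (Fin.cast hl a)) (inr (Fin.cast hl b))) ∧
      ∀ a, (∃ i, r.rel (inr a) (inl i)) ↔ ∃ i, s.rel (inr (Fin.cast hl a)) (inl i) := by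
  rw [lowerProj_eq_upperProj_reflect, lowerProj_eq_upperProj_reflect,
    upperProj_eq_upperProj_iff]
  rfl

end upperProj

section comp

variable {r₁ r₂ : CPartition} {h : r₁.l = r₂.k}
  (hmid : AgreeOnMiddle r₁ r₂ h)
  (hthrough : ∀ m, (∃ i, r₁.rel (inr m) (inl i)) ↔ ∃ c, r₂.rel (inl (Fin.cast h m)) (inr c))
include hmid hthrough

theorem upperProj_vcomp : upperProj (vcomp r₁ r₂ h) = upperProj r₁ := by
  refine upperProj_eq_upperProj_iff.2 ⟨rfl, fun _ => rfl, vcomp_rel_inl_inl hmid,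
    fun i => ⟨fun ⟨c, hc⟩ => ?_, fun ⟨a, hia⟩ => ?_⟩⟩
  · obtain ⟨m, him, -⟩ := (vcomp_rel_inl_inr hmid i c).1 hc
    exact ⟨m, him⟩
  · obtain ⟨c, hac⟩ := (hthrough a).1 ⟨i, r₁.rel.symm' hia⟩
    exact ⟨c, (vcomp_rel_inl_inr hmid i c).2 ⟨a, hia, hac⟩⟩

theorem lowerProj_vcomp : lowerProj (vcomp r₁ r₂ h) = lowerProj r₂ := by
  refine lowerProj_eq_lowerProj_iff.2 ⟨rfl, fun _ => rfl, vcomp_rel_inr_inr hmid,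
    fun c => ⟨fun ⟨i, hci⟩ => ?_, fun ⟨m, hcm⟩ => ?_⟩⟩
  · obtain ⟨m, -, hmc⟩ := (vcomp_rel_inl_inr hmid i c).1 ((vcomp r₁ r₂ h).rel.symm' hci)
    exact ⟨Fin.cast h m, r₂.rel.symm' hmc⟩
  · obtain ⟨i, hai⟩ := (hthrough (Fin.cast h.symm m)).2 ⟨c, r₂.rel.symm' hcm⟩
    exact ⟨i, (vcomp r₁ r₂ h).rel.symm' <|
      (vcomp_rel_inl_inr hmid i c).2 ⟨_, r₁.rel.symm' hai, r₂.rel.symm' hcm⟩⟩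

end comp

section NoCrossingThrough

variable {k l : ℕ} {R S : Setoid (Fin k ⊕ Fin l)}

/-- Through-strings `i — a` and `j — b` with `i < j` and `b < a` cross (`ptIdx` runs through
the lower row from right to left), so a noncrossing partition puts them in one block. -/
def NoCrossingThrough (R : Setoid (Fin k ⊕ Fin l)) : Prop :=
  ∀ ⦃i j : Fin k⦄ ⦃a b : Fin l⦄, i < j → b < a → R (inl i) (inr a) → R (inl j) (inr b) →
    R (inl i) (inl j)

theorem NoCrossingThrough.rel_inr_inr (hR : NoCrossingThrough R)
    (hU : ∀ i j, S (inl i) (inl j) → R (inl i) (inl j))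
    (hT : ∀ b, (∃ i, S (inr b) (inl i)) → ∃ j, R (inr b) (inl j))
    {i : Fin k} (IH : ∀ j < i, ∀ c, R (inl j) (inr c) → S (inl j) (inr c))
    {a b : Fin l} (hba : b < a) (hia : R (inl i) (inr a)) (hib : S (inl i) (inr b)) :
    R (inr a) (inr b) := by
  by_contra hab
  obtain ⟨j, hbj⟩ := hT b ⟨i, S.symm' hib⟩
  have hij : ¬ R (inl i) (inl j) := fun hij =>
    hab (R.trans' (R.symm' hia) (R.trans' hij (R.symm' hbj)))
  rcases lt_trichotomy i j with hlt | rfl | hgt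
  · exact hij (hR hlt hba hia (R.symm' hbj))
  · exact hij (R.refl' _)
  · exact hij (hU _ _ (S.trans' hib (S.symm' (IH j hgt b (R.symm' hbj)))))

theorem NoCrossingThrough.rel_inl_inr (hR : NoCrossingThrough R) (hS : NoCrossingThrough S)
    (hU : ∀ i j, R (inl i) (inl j) ↔ S (inl i) (inl j))
    (hL : ∀ a b, R (inr a) (inr b) → S (inr a) (inr b))
    (hTU : ∀ i, (∃ a, R (inl i) (inr a)) → ∃ a, S (inl i) (inr a))
    (hTL : ∀ a, (∃ i, R (inr a) (inl i)) ↔ ∃ i, S (inr a) (inl i))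
    {i : Fin k} (IH : ∀ j < i, ∀ c, R (inl j) (inr c) ↔ S (inl j) (inr c))
    {a : Fin l} (hia : R (inl i) (inr a)) : S (inl i) (inr a) := by
  obtain ⟨b, hib⟩ := hTU i ⟨a, hia⟩
  rcases lt_trichotomy b a with hba | rfl | hab
  · refine S.trans' hib (S.symm' (hL a b ?_))
    exact hR.rel_inr_inr (fun i j => (hU i j).2) (fun b => (hTL b).2)
      (fun j hj c => (IH j hj c).1) hba hia hib
  · exact hib
  · exact S.trans' hib (hS.rel_inr_inr (fun i j => (hU i j).1) (fun a => (hTL a).1)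
      (fun j hj c => (IH j hj c).2) hab hib hia)

/-- The lower partners of the upper point `i` are pinned down by induction on `i`: any other
choice would make its string cross the string of an earlier upper point. -/
theorem NoCrossingThrough.eq (hR : NoCrossingThrough R) (hS : NoCrossingThrough S)
    (hU : ∀ i j, R (inl i) (inl j) ↔ S (inl i) (inl j))
    (hL : ∀ a b, R (inr a) (inr b) ↔ S (inr a) (inr b))
    (hTU : ∀ i, (∃ a, R (inl i) (inr a)) ↔ ∃ a, S (inl i) (inr a))
    (hTL : ∀ a, (∃ i, R (inr a) (inl i)) ↔ ∃ i, S (inr a) (inl i)) : R = S := by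
  have hM : ∀ i a, R (inl i) (inr a) ↔ S (inl i) (inr a) := by
    intro i
    induction i using WellFoundedLT.induction with
    | _ i IH =>
      exact fun a => ⟨hR.rel_inl_inr hS hU (fun a b => (hL a b).1) (fun i => (hTU i).1) hTL IH,
        hS.rel_inl_inr hR (fun i j => (hU i j).symm) (fun a b => (hL a b).2)
          (fun i => (hTU i).2) (fun a => (hTL a).symm) (fun j hj c => (IH j hj c).symm)⟩
  exact Setoid.ext_sum hU hM hL

end NoCrossingThrough

theorem NonCrossing.noCrossingThrough {p : CPartition} (hp : p.NonCrossing) :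
    NoCrossingThrough p.rel := by
  intro i j a b hij hba hia hjb
  have := a.isLt
  refine hp _ _ _ _ ?_ ?_ ?_ hia hjb <;>
    simp only [ptIdx, Sum.elim_inl, Sum.elim_inr, Fin.lt_def] at hij hba ⊢ <;> omega

theorem eq_of_upperProj_eq_of_lowerProj_eq {r s : CPartition} (hr : r.NonCrossing)
    (hs : s.NonCrossing) (h₁ : upperProj r = upperProj s) (h₂ : lowerProj r = lowerProj s) :
    r = s := by
  obtain ⟨hk, huc, hU, hTU⟩ := upperProj_eq_upperProj_iff.1 h₁
  obtain ⟨hl, hlc, hL, hTL⟩ := lowerProj_eq_lowerProj_iff.1 h₂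
  refine eq_of_rel_cast hk hl huc hlc hU ?_ hL
  obtain ⟨k, l, uc, lc, R⟩ := r
  obtain ⟨k', l', uc', lc', S⟩ := s
  dsimp only at hk hl
  subst hk hl
  simp only [Fin.cast_eq_self] at hU hL hTU hTL ⊢
  rw [hr.noCrossingThrough.eq hs.noCrossingThrough hU hL hTU hTL]
  exact fun _ _ => Iff.rfl

variable {C : PartitionCategory} {n : ℕ} {w : Fin n → Bool}

theorem equivIn_symm {p q : CPartition} : EquivIn C.mem p q → EquivIn C.mem q p := by
  rintro ⟨r, hr, rfl, rfl⟩
  exact ⟨reflect r, C.reflect_mem r hr, (lowerProj_eq_upperProj_reflect r).symm,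
    (lowerProj_eq_upperProj_reflect _).trans (congrArg upperProj (reflect_reflect r))⟩

theorem equivIn_trans {p q s : CPartition} :
    EquivIn C.mem p q → EquivIn C.mem q s → EquivIn C.mem p s := by
  rintro ⟨r₁, hr₁, rfl, rfl⟩ ⟨r₂, hr₂, hq, rfl⟩
  obtain ⟨h, hcol, hmid, hthrough⟩ :=
    upperProj_eq_upperProj_iff.1 ((lowerProj_eq_upperProj_reflect r₁).symm.trans hq.symm)
  exact ⟨vcomp r₁ r₂ h, C.vcomp_mem _ _ h hr₁ hr₂ hcol, upperProj_vcomp hmid hthrough,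
    lowerProj_vcomp hmid hthrough⟩

theorem reflect_mem_ofColors {r : CPartition} (hr : r ∈ OfColors C.mem n w) :
    reflect r ∈ OfColors C.mem n w :=
  let ⟨hm, hk, hl, huc, hlc⟩ := hr
  ⟨C.reflect_mem r hm, hl, hk, hlc, huc⟩

theorem upperProj_mem_projW {r : CPartition} (hr : r ∈ OfColors C.mem n w) :
    upperProj r ∈ ProjW C.mem n w :=
  let ⟨hm, hk, _, huc, _⟩ := hr
  ⟨⟨C.vcomp_mem r (reflect r) rfl hm (C.reflect_mem r hm) fun _ => rfl, hk, hk, huc, huc⟩,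
    upperProj_isProjective r⟩

theorem lowerProj_mem_projW {r : CPartition} (hr : r ∈ OfColors C.mem n w) :
    lowerProj r ∈ ProjW C.mem n w := by
  rw [lowerProj_eq_upperProj_reflect]
  exact upperProj_mem_projW (reflect_mem_ofColors hr)

theorem mem_ofColors_of_upperProj_of_lowerProj {r : CPartition} (hr : r ∈ C.mem)
    (h₁ : upperProj r ∈ OfColors C.mem n w) (h₂ : lowerProj r ∈ OfColors C.mem n w) :
    r ∈ OfColors C.mem n w :=
  let ⟨_, hk, _, huc, _⟩ := h₁
  let ⟨_, hl, _, hlc, _⟩ := h₂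
  ⟨hr, hk, hl, huc, hlc⟩

theorem finite_ofColors (A : Set CPartition) : (OfColors A n w).Finite := by
  have : Finite (Setoid (Fin n ⊕ Fin n)) :=
    Finite.of_injective _ fun _ _ => Setoid.eq_iff_rel_eq.2
  refine Set.Finite.subset (Set.finite_range fun R : Setoid (Fin n ⊕ Fin n) =>
    (⟨n, n, w, w, R⟩ : CPartition)) ?_
  rintro ⟨k, l, uc, lc, R⟩ ⟨-, hk, hl, huc, hlc⟩
  dsimp only at hk hl
  subst hk hl
  simp only [Fin.cast_eq_self] at huc hlc
  obtain rfl := funext huc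
  obtain rfl := funext hlc
  exact ⟨R, rfl⟩

theorem card_ofColors_eq_card_equivIn_pairs (hnc : ∀ p ∈ C.mem, p.NonCrossing) :
    Nat.card {r // r ∈ OfColors C.mem n w} =
      Nat.card {x : CPartition × CPartition //
        x.1 ∈ ProjW C.mem n w ∧ x.2 ∈ ProjW C.mem n w ∧ EquivIn C.mem x.1 x.2} := by
  refine Nat.card_congr (Equiv.ofBijective (fun r => ⟨(upperProj r, lowerProj r),
    upperProj_mem_projW r.2, lowerProj_mem_projW r.2, r.1, r.2.1, rfl, rfl⟩) ⟨?_, ?_⟩)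
  · intro r s hrs
    exact Subtype.ext <| eq_of_upperProj_eq_of_lowerProj_eq (hnc _ r.2.1) (hnc _ s.2.1)
      (congrArg (fun x => x.1.1) hrs) (congrArg (fun x => x.1.2) hrs)
  · rintro ⟨⟨p, q⟩, h₁, h₂, r, hr, hp, hq⟩
    obtain rfl : upperProj r = p := hp
    obtain rfl : lowerProj r = q := hq
    exact ⟨⟨r, mem_ofColors_of_upperProj_of_lowerProj hr h₁.1 h₂.1⟩, rfl⟩

end CPartition

theorem card_Cww_eq_sum_sq_general (C : PartitionCategory)
    (hnc : ∀ p ∈ C.mem, p.NonCrossing)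
    (n : ℕ) (w : Fin n → Bool) (E : Finset CPartition)
    (hrep : ∀ p ∈ ProjW C.mem n w, ∃! q, q ∈ E ∧ EquivIn C.mem p q) :
    Nat.card {p : CPartition // p ∈ OfColors C.mem n w} =
      ∑ p ∈ E, (Nat.card {q : CPartition // q ∈ ProjW C.mem n w ∧
        EquivIn C.mem q p}) ^ 2 := by
  have hfin : (ProjW C.mem n w).Finite := (finite_ofColors C.mem).subset fun _ hp => hp.1
  rw [card_ofColors_eq_card_equivIn_pairs hnc]
  exact hfin.card_rel_pairs_eq_sum_sq (r := EquivIn C.mem) equivIn_symm equivIn_trans E hrep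

/-- for a category of noncrossing partitions `C` and a color word
`w`, the cardinality of `C(w,w)` equals `Σ_p n_w(p)²`, the sum running over a
system `E` of representatives of the equivalence classes of `Proj(w)`, where
`n_w(p)` is the cardinality of the class of `p` in `Proj(w)`. -/
theorem card_Cww_eq_sum_sq (C : PartitionCategory)
    (hnc : ∀ p ∈ C.mem, p.NonCrossing)
    (n : ℕ) (w : Fin n → Bool) (E : Finset CPartition)
    (hE : ↑E ⊆ ProjW C.mem n w)
    (hrep : ∀ p ∈ ProjW C.mem n w, ∃! q, q ∈ E ∧ EquivIn C.mem p q) :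
    Nat.card {p : CPartition // p ∈ OfColors C.mem n w} =
      ∑ p ∈ E, (Nat.card {q : CPartition // q ∈ ProjW C.mem n w ∧
        EquivIn C.mem q p}) ^ 2 :=
  card_Cww_eq_sum_sq_general C hnc n w E hrep
end

section
/- Let C be a category of noncrossing colored partitions with I(C) = ℤ \ {0}, S(C) = ℤ_s for a finite s ≥ 1 (π_k ∼ π_{k'} iff k ≡ k' mod s), and J(C) = nℤ. Then n divides s. -/
open scoped Classical

open CPartition

/-!
Since `s ∣ (s + 1) - 1`, some `r ∈ C` has `r*r = π_{s+1}` and `rr* = π_1`. In the one-block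
partition `r*r` an upper point can reach the lower row only through the middle row, so every upper
point of `r` is joined to its single lower point: `r` is one white block with `s + 1` upper points
and one lower point. Rotating its leftmost upper point down and closing the two lower points with
the cap obtained by rotating the white identity gives `θ_s ∈ C`, hence `β_s = θ_s*θ_s ∈ C`, and
`J(C) = nℤ` yields `n ∣ s`.
-/

namespace CPartition

open Sum

def oneBlock (k l : ℕ) (c : Bool) : CPartition := ⟨k, l, fun _ => c, fun _ => c, ⊤⟩

theorem uc_eq_of_eq_piP {p : CPartition} {k : ℕ} {c : Bool} (h : p = piP k c) (i : Fin p.k) :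
    p.uc i = c := by
  subst h; rfl

theorem rel_of_eq_piP {p : CPartition} {k : ℕ} {c : Bool} (h : p = piP k c)
    (x y : Fin p.k ⊕ Fin p.l) : p.rel.r x y := by
  subst h; trivial

theorem piZ_natCast_succ (k : ℕ) : piZ ((k + 1 : ℕ) : ℤ) = piP (k + 1) true := by
  rw [piZ, Int.natAbs_natCast, decide_eq_true (by positivity)]

theorem betaZ_natCast (k : ℕ) : betaZ k = betaP k true := by
  rw [betaZ, Int.natAbs_natCast]
  cases k with
  | zero => unfold betaP; congr <;> funext i <;> exact i.elim0
  | succ k => rw [decide_eq_true (by positivity)]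

theorem exists_rel_inr_of_vcomp_rel {p q : CPartition} {h : p.l = q.k} {i : Fin p.k}
    {j : Fin q.l} (hij : (vcomp p q h).rel.r (inl i) (inr j)) :
    ∃ m, p.rel.r (inl i) (inr m) := by
  -- "joined in `p` to the middle row" is invariant under the generators of the composite
  let f : Fin p.k ⊕ (Fin p.l ⊕ Fin q.l) → Prop :=
    Sum.elim (fun i => ∃ m, p.rel.r (inl i) (inr m)) (fun _ => True)
  have hf : ∀ a, f (Sum.map id inl a) ↔ ∃ m, p.rel.r a (inr m) := by
    rintro (i | m)
    · rfl
    · exact iff_of_true trivial ⟨m, p.rel.refl _⟩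
  suffices key : Setoid.ker f (inl i) (inr (inr j)) by simpa [f] using key
  refine Setoid.eqvGen_le (fun x y hxy => ?_) hij
  rcases hxy with ⟨a, b, hab, rfl, rfl⟩ | ⟨a, b, -, rfl, rfl⟩
  · exact propext <| (hf a).trans <| (exists_congr fun m =>
      ⟨p.rel.trans (p.rel.symm hab), p.rel.trans hab⟩).trans (hf b).symm
  · rfl

theorem eq_oneBlock_of_vcomp_reflect {r : CPartition} {a : ℕ} {c : Bool}
    (hA : vcomp r (reflect r) rfl = piP a c) (hB : vcomp (reflect r) r rfl = piP 1 c) :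
    r = oneBlock a 1 c := by
  obtain ⟨k, l, uc, lc, rel⟩ := r
  obtain rfl : k = a := congrArg CPartition.k hA
  obtain rfl : l = 1 := congrArg CPartition.k hB
  obtain rfl : uc = fun _ => c := funext (uc_eq_of_eq_piP hA)
  obtain rfl : lc = fun _ => c := funext (uc_eq_of_eq_piP hB)
  have hto : ∀ x, rel.r x (inr 0) := by
    rintro (i | m)
    · obtain ⟨m, hm⟩ := exists_rel_inr_of_vcomp_rel (rel_of_eq_piP hA (inl i) (inr i))
      rwa [Subsingleton.elim m 0] at hm
    · rw [Subsingleton.elim m 0]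
  obtain rfl : rel = ⊤ :=
    Setoid.ext fun x y => iff_of_true (rel.trans (hto x) (rel.symm (hto y))) trivial
  rfl

theorem vcomp_thetaP_reflect (k : ℕ) (c : Bool) :
    vcomp (thetaP k c) (reflect (thetaP k c)) rfl = betaP k c := by
  unfold betaP vcomp
  congr 1
  ext x y
  constructor
  · intro hxy
    rcases x with i | i <;> rcases y with j | j
    · exact LiftRel.inl trivial
    · exact (exists_rel_inr_of_vcomp_rel (h := rfl) hxy).elim fun m _ => m.elim0
    · exact (exists_rel_inr_of_vcomp_rel
        ((vcomp (thetaP k c) (reflect (thetaP k c)) rfl).rel.symm hxy)).elim fun m _ => m.elim0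
    · exact LiftRel.inr trivial
  · rintro (⟨-⟩ | ⟨-⟩)
    · exact Relation.EqvGen.rel _ _ (Or.inl ⟨inl _, inl _, trivial, rfl, rfl⟩)
    · exact Relation.EqvGen.rel _ _ (Or.inr ⟨inr _, inr _, trivial, rfl, rfl⟩)

end CPartition

namespace PartitionCategory

open Sum

variable (C : PartitionCategory)

theorem betaP_mem_of_thetaP_mem {k : ℕ} {c : Bool} (h : thetaP k c ∈ C.mem) :
    betaP k c ∈ C.mem :=
  vcomp_thetaP_reflect k c ▸ C.vcomp_mem _ _ rfl h (C.reflect_mem _ h) finZeroElim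

theorem thetaP_mem_of_oneBlock_mem {a : ℕ} (h : oneBlock (a + 1) 1 true ∈ C.mem) :
    thetaP a true ∈ C.mem := by
  have hcap := C.rotUp_mem _ C.id_mem 0 rfl
  have hθ := C.vcomp_mem _ _ rfl (C.rotDown_mem _ h a rfl) hcap fun _ => rfl
  convert hθ using 1
  unfold thetaP vcomp
  congr
  · funext j; exact j.elim0
  · ext x y
    rcases x with i | i
    · rcases y with j | j
      · exact iff_of_true trivial
          (Relation.EqvGen.rel _ _ (Or.inl ⟨inl i, inl j, trivial, rfl, rfl⟩))
      · exact j.elim0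
    · exact i.elim0

end PartitionCategory

theorem n_divides_s_general (C : PartitionCategory)
    (s n : ℕ)
    (hS : ∀ k k' : ℤ, k ≠ 0 → k' ≠ 0 →
      (EquivIn C.mem (piZ k) (piZ k') ↔ (s : ℤ) ∣ (k - k')))
    (hJ : ∀ k : ℤ, betaZ k ∈ C.mem ↔ (n : ℤ) ∣ k) :
    n ∣ s := by
  obtain ⟨r, hr, hA, hB⟩ := (hS ((s + 1 : ℕ) : ℤ) 1 (by omega) one_ne_zero).mpr (by simp)
  rw [piZ_natCast_succ] at hA
  have hR : oneBlock (s + 1) 1 true ∈ C.mem := eq_oneBlock_of_vcomp_reflect hA hB ▸ hr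
  have hβ := C.betaP_mem_of_thetaP_mem (C.thetaP_mem_of_oneBlock_mem hR)
  exact_mod_cast (hJ s).mp (betaZ_natCast s ▸ hβ)

/-- if `C` is a category of noncrossing colored partitions with
`I(C) = ℤ \ {0}`, `S(C) = ℤ_s` for a finite `s ≥ 1` (i.e. `π_k ∼ π_{k'}` iff
`k ≡ k' mod s`) and `J(C) = nℤ` (i.e. `β_k ∈ C` iff `n ∣ k`), then `n` divides
`s`. -/
theorem n_divides_s (C : PartitionCategory)
    (hnc : ∀ p ∈ C.mem, p.NonCrossing)
    (hI : ∀ k : ℤ, k ≠ 0 → piZ k ∈ C.mem)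
    (s n : ℕ) (hs : 1 ≤ s)
    (hS : ∀ k k' : ℤ, k ≠ 0 → k' ≠ 0 →
      (EquivIn C.mem (piZ k) (piZ k') ↔ (s : ℤ) ∣ (k - k')))
    (hJ : ∀ k : ℤ, betaZ k ∈ C.mem ↔ (n : ℤ) ∣ k) :
    n ∣ s :=
  n_divides_s_general C s n hS hJ
end

section
/- Let p be a noncrossing partition of k upper and l lower points. Then there exists a unique pair (p_l, p_u) of building partitions such that p = p_l* ∘ p_u, where a building partition is a partition all of whose lower points are in distinct blocks, each lower point is connected to at least one upper point, and the minimal upper points connected to the lower points are strictly increasing from left to right. -/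
/-- Position of a point in the counterclockwise planar order: the upper points
`1, …, k` followed by the lower points in reversed order. -/
def ptIdx {k l : ℕ} : Fin k ⊕ Fin l → ℕ :=
  Sum.elim (fun i => (i : ℕ)) (fun j => k + (l - 1 - (j : ℕ)))

/-- A partition is noncrossing if its strings can be drawn without crossings. -/
def NonCrossingS {k l : ℕ} (p : Setoid (Fin k ⊕ Fin l)) : Prop :=
  ∀ a b c d : Fin k ⊕ Fin l,
    ptIdx a < ptIdx b → ptIdx b < ptIdx c → ptIdx c < ptIdx d →
    p.r a c → p.r b d → p.r a b

/-- A building partition: all lower points lie in pairwise distinct blocks, every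
lower point is connected to some upper point, and the minimal upper points
`min_up` attached to the lower points are strictly increasing. -/
def IsBuilding {k t : ℕ} (q : Setoid (Fin k ⊕ Fin t)) : Prop :=
  (∀ j j' : Fin t, q.r (Sum.inr j) (Sum.inr j') → j = j') ∧
    ∃ f : Fin t → Fin k, StrictMono f ∧
      ∀ j : Fin t, q.r (Sum.inl (f j)) (Sum.inr j) ∧
        ∀ i : Fin k, q.r (Sum.inl i) (Sum.inr j) → f j ≤ i

/-! When the points of the middle row of a composition lie in pairwise distinct blocks on both
sides, the join is explicit: an upper and a lower point are connected iff they are connected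
through a single middle point. So for a noncrossing `p` one takes the least upper point (the
leader) of each through-block, and lets `p_u` and `p_l` attach the `j`-th new point to the block
of the `j`-th leader; noncrossingness makes the least lower points of the through-blocks increase
along with their leaders. Conversely, in any such decomposition the
`min_up` map of `p_u` is forced to be the increasing enumeration of the leaders, which pins down
`t`, `p_u` and `p_l`. -/

open Sum

theorem exists_least_of_exists {α : Type*} [LinearOrder α] [WellFoundedLT α] {P : α → Prop}
    (h : ∃ a, P a) : ∃ a, P a ∧ ∀ b, P b → a ≤ b :=
  ⟨wellFounded_lt.min {a | P a} h, wellFounded_lt.min_mem _ h,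
    fun _ hb => wellFounded_lt.min_le hb⟩

theorem Setoid.rel_congr {α : Type*} (r : Setoid α) {a a' b b' : α} (ha : r a a') (hb : r b b') :
    r a b ↔ r a' b' :=
  ⟨fun h => r.trans' (r.trans' (r.symm' ha) h) hb, fun h => r.trans' (r.trans' ha h) (r.symm' hb)⟩

theorem Setoid.rel_inr_inr_iff {α β : Type*} {r : Setoid (α ⊕ β)}
    (hr : ∀ b b', r (inr b) (inr b') → b = b') {b b' : β} : r (inr b) (inr b') ↔ b = b' :=
  ⟨hr b b', fun h => h ▸ r.refl' _⟩

theorem Finset.exists_card_eq_and_eq_orderEmbOfFin {α : Type*} [LinearOrder α] {s : Finset α}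
    {t : ℕ} {f : Fin t → α} (hf : StrictMono f) (hs : ∀ a, a ∈ s ↔ ∃ j, f j = a) :
    ∃ h : s.card = t, f = s.orderEmbOfFin h := by
  have hcard : s.card = t := by
    rw [show s = univ.image f by ext a; simp [hs], card_image_of_injective _ hf.injective,
      card_univ, Fintype.card_fin]
  exact ⟨hcard, orderEmbOfFin_unique hcard (fun j => (hs _).2 ⟨j, rfl⟩) hf⟩

section Composition

variable {k t l : ℕ} {q : Setoid (Fin k ⊕ Fin t)} {s : Setoid (Fin t ⊕ Fin l)}

open Classical in
/-- Names the blocks of the join underlying `scomp q s` by their `q`-block, or, for blocks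
avoiding the middle row, by their `s`-block; this is consistent once the middle points lie in
distinct `s`-blocks. -/
noncomputable def joinLabel (q : Setoid (Fin k ⊕ Fin t)) (s : Setoid (Fin t ⊕ Fin l)) :
    Fin k ⊕ (Fin t ⊕ Fin l) → Quotient q ⊕ Quotient s
  | inl i => inl (Quotient.mk q (inl i))
  | inr a => if h : ∃ j, s (inl j) a then inl (Quotient.mk q (inr h.choose))
      else inr (Quotient.mk s a)

theorem joinLabel_inr_of_rel (hs : ∀ j j', s (inl j) (inl j') → j = j') {j : Fin t}
    {a : Fin t ⊕ Fin l} (h : s (inl j) a) :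
    joinLabel q s (inr a) = inl (Quotient.mk q (inr j)) := by
  have hex : ∃ j, s (inl j) a := ⟨j, h⟩
  rw [joinLabel, dif_pos hex, hs _ _ (s.trans' hex.choose_spec (s.symm' h))]

theorem joinLabel_inr_of_not_rel {a : Fin t ⊕ Fin l} (h : ∀ j, ¬ s (inl j) a) :
    joinLabel q s (inr a) = inr (Quotient.mk s a) := by
  rw [joinLabel, dif_neg (not_exists.2 h)]

theorem joinLabel_inr_cases (hs : ∀ j j', s (inl j) (inl j') → j = j') (a : Fin t ⊕ Fin l) :
    (∃ j, s (inl j) a ∧ joinLabel q s (inr a) = inl (Quotient.mk q (inr j))) ∨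
      joinLabel q s (inr a) = inr (Quotient.mk s a) := by
  by_cases ha : ∃ j, s (inl j) a
  · obtain ⟨j, hj⟩ := ha
    exact Or.inl ⟨j, hj, joinLabel_inr_of_rel hs hj⟩
  · exact Or.inr (joinLabel_inr_of_not_rel (not_exists.1 ha))

theorem joinLabel_map_inl (hs : ∀ j j', s (inl j) (inl j') → j = j') (c : Fin k ⊕ Fin t) :
    joinLabel q s (Sum.map id inl c) = inl (Quotient.mk q c) := by
  rcases c with i | j
  · rfl
  · exact joinLabel_inr_of_rel hs (s.refl' _)

theorem scomp_le_ker_joinLabel (hs : ∀ j j', s (inl j) (inl j') → j = j') :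
    scomp q s ≤ Setoid.ker (joinLabel q s ∘ Sum.map id inr) := by
  refine fun a b h => Setoid.eqvGen_le (s := Setoid.ker (joinLabel q s)) ?_ h
  rintro _ _ (⟨a, b, hab, rfl, rfl⟩ | ⟨a, b, hab, rfl, rfl⟩)
  · rw [Setoid.ker_def, joinLabel_map_inl hs, joinLabel_map_inl hs, Quotient.sound hab]
  · by_cases ha : ∃ j, s (inl j) a
    · obtain ⟨j, hj⟩ := ha
      exact (joinLabel_inr_of_rel hs hj).trans (joinLabel_inr_of_rel hs (s.trans' hj hab)).symm
    · have hb : ∀ j, ¬ s (inl j) b := fun j hj => ha ⟨j, s.trans' hj (s.symm' hab)⟩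
      rw [Setoid.ker_def, joinLabel_inr_of_not_rel (not_exists.1 ha),
        joinLabel_inr_of_not_rel hb, Quotient.sound hab]

theorem scomp_inl_inl_iff (hs : ∀ j j', s (inl j) (inl j') → j = j') {i i' : Fin k} :
    scomp q s (inl i) (inl i') ↔ q (inl i) (inl i') :=
  ⟨fun h => Quotient.exact (inl_injective (scomp_le_ker_joinLabel hs h)),
    fun h => Relation.EqvGen.rel _ _ (Or.inl ⟨inl i, inl i', h, rfl, rfl⟩)⟩

theorem scomp_inl_inr_iff (hs : ∀ j j', s (inl j) (inl j') → j = j') {i : Fin k} {x : Fin l} :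
    scomp q s (inl i) (inr x) ↔ ∃ j, q (inl i) (inr j) ∧ s (inl j) (inr x) := by
  refine ⟨fun h => ?_, fun ⟨j, hij, hjx⟩ => ?_⟩
  · have hlabel : inl (Quotient.mk q (inl i)) = joinLabel q s (inr (inr x)) :=
      scomp_le_ker_joinLabel hs h
    rcases joinLabel_inr_cases hs (inr x) with ⟨j, hjx, hx⟩ | hx <;> rw [hx] at hlabel
    · exact ⟨j, Quotient.exact (inl_injective hlabel), hjx⟩
    · exact absurd hlabel inl_ne_inr
  · exact Relation.EqvGen.trans _ (inr (inl j)) _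
      (Relation.EqvGen.rel _ _ (Or.inl ⟨inl i, inr j, hij, rfl, rfl⟩))
      (Relation.EqvGen.rel _ _ (Or.inr ⟨inl j, inr x, hjx, rfl, rfl⟩))

theorem scomp_inr_inr_iff (hq : ∀ j j', q (inr j) (inr j') → j = j')
    (hs : ∀ j j', s (inl j) (inl j') → j = j') {x y : Fin l} :
    scomp q s (inr x) (inr y) ↔ s (inr x) (inr y) := by
  refine ⟨fun h => ?_, fun h => Relation.EqvGen.rel _ _ (Or.inr ⟨inr x, inr y, h, rfl, rfl⟩)⟩
  have hlabel : joinLabel q s (inr (inr x)) = joinLabel q s (inr (inr y)) :=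
    scomp_le_ker_joinLabel hs h
  rcases joinLabel_inr_cases hs (inr x) with ⟨j, hjx, hx⟩ | hx <;>
    rcases joinLabel_inr_cases hs (inr y) with ⟨j', hjy, hy⟩ | hy <;>
    rw [hx, hy] at hlabel
  · obtain rfl := hq _ _ (Quotient.exact (inl_injective hlabel))
    exact s.trans' (s.symm' hjx) hjy
  · exact absurd hlabel inl_ne_inr
  · exact absurd hlabel.symm inl_ne_inr
  · exact Quotient.exact (inr_injective hlabel)

end Composition

section Leaders

variable {k l : ℕ} (p : Setoid (Fin k ⊕ Fin l))

open Classical in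
noncomputable def leaders : Finset (Fin k) :=
  {i | (∃ x, p (inl i) (inr x)) ∧ ∀ i', p (inl i') (inl i) → i ≤ i'}

noncomputable def numThroughBlocks : ℕ := (leaders p).card

noncomputable def leaderEmb : Fin (numThroughBlocks p) ↪o Fin k :=
  (leaders p).orderEmbOfFin rfl

variable {p}

theorem mem_leaders {i : Fin k} :
    i ∈ leaders p ↔ (∃ x, p (inl i) (inr x)) ∧ ∀ i', p (inl i') (inl i) → i ≤ i' := by
  classical
  simp [leaders]

theorem eq_of_mem_leaders {i i' : Fin k} (hi : i ∈ leaders p) (hi' : i' ∈ leaders p)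
    (h : p (inl i) (inl i')) : i = i' :=
  le_antisymm ((mem_leaders.1 hi).2 i' (p.symm' h)) ((mem_leaders.1 hi').2 i h)

theorem NonCrossingS.lower_lt_of_upper_lt (hp : NonCrossingS p) {i i' : Fin k} {x y : Fin l}
    (hii' : i < i') (hne : ¬ p (inl i) (inl i')) (hx : p (inl i) (inr x))
    (hy : p (inl i') (inr y)) : x < y := by
  by_contra! hyx
  refine hne ?_
  rcases hyx.lt_or_eq with hyx | rfl
  · have := i'.isLt
    exact hp (inl i) (inl i') (inr x) (inr y) hii' (by simp [ptIdx]; omega)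
      (by simp [ptIdx]; omega) hx hy
  · exact p.trans' hx (p.symm' hy)

variable (p)

theorem leaderEmb_mem (j : Fin (numThroughBlocks p)) : leaderEmb p j ∈ leaders p :=
  Finset.orderEmbOfFin_mem _ _ _

theorem eq_of_rel_leaderEmb {j j' : Fin (numThroughBlocks p)}
    (h : p (inl (leaderEmb p j)) (inl (leaderEmb p j'))) : j = j' :=
  (leaderEmb p).injective (eq_of_mem_leaders (leaderEmb_mem p j) (leaderEmb_mem p j') h)

theorem exists_rel_leaderEmb {i : Fin k} {x : Fin l} (h : p (inl i) (inr x)) :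
    ∃ j, p (inl i) (inl (leaderEmb p j)) := by
  obtain ⟨i₀, hi₀, hmin⟩ :=
    exists_least_of_exists (P := fun i₀ => p (inl i₀) (inl i)) ⟨i, p.refl' _⟩
  have hlead : i₀ ∈ leaders p :=
    mem_leaders.2 ⟨⟨x, p.trans' hi₀ h⟩, fun i' hi' => hmin i' (p.trans' hi' hi₀)⟩
  rw [← Finset.mem_coe, ← Finset.range_orderEmbOfFin (leaders p) rfl] at hlead
  obtain ⟨j, rfl⟩ := hlead
  exact ⟨j, p.symm' hi₀⟩

end Leaders

section Factors

variable {k l t : ℕ}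

/-- `f j` is an upper point of `p` representing the `j`-th through-block; the new row has one
point per through-block. -/
def upperFactor (p : Setoid (Fin k ⊕ Fin l)) (f : Fin t → Fin k) : Setoid (Fin k ⊕ Fin t) :=
  p.comap (inl ∘ Sum.elim id f)

def lowerFactor (p : Setoid (Fin k ⊕ Fin l)) (f : Fin t → Fin k) : Setoid (Fin l ⊕ Fin t) :=
  p.comap (Sum.elim inr (inl ∘ f))

variable {p : Setoid (Fin k ⊕ Fin l)} {f : Fin t → Fin k}

theorem eq_scomp_upperFactor_lowerFactor
    (hdistinct : ∀ j j', p (inl (f j)) (inl (f j')) → j = j')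
    (hcover : ∀ i x, p (inl i) (inr x) → ∃ j, p (inl i) (inl (f j))) :
    p = scomp (upperFactor p f) (sreflect (lowerFactor p f)) := by
  have hs : ∀ j j', sreflect (lowerFactor p f) (inl j) (inl j') → j = j' := hdistinct
  have hmixed : ∀ i x, p (inl i) (inr x) ↔
      scomp (upperFactor p f) (sreflect (lowerFactor p f)) (inl i) (inr x) := fun i x => by
    rw [scomp_inl_inr_iff hs]
    exact ⟨fun h => (hcover i x h).imp fun j hj => ⟨hj, p.trans' (p.symm' hj) h⟩,
      fun ⟨j, hij, hjx⟩ => p.trans' hij hjx⟩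
  ext a b
  rcases a with i | x <;> rcases b with i' | y
  · exact (scomp_inl_inl_iff (q := upperFactor p f) hs).symm
  · exact hmixed i y
  · exact p.comm'.trans ((hmixed i' x).trans (Setoid.comm' _))
  · exact (scomp_inr_inr_iff hdistinct hs).symm

theorem isBuilding_upperFactor_leaderEmb (p : Setoid (Fin k ⊕ Fin l)) :
    IsBuilding (upperFactor p (leaderEmb p)) :=
  ⟨fun _ _ => eq_of_rel_leaderEmb p, leaderEmb p, (leaderEmb p).strictMono,
    fun j => ⟨p.refl' _, fun i hi => (mem_leaders.1 (leaderEmb_mem p j)).2 i hi⟩⟩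

theorem isBuilding_lowerFactor_leaderEmb (hp : NonCrossingS p) :
    IsBuilding (lowerFactor p (leaderEmb p)) := by
  choose g hg using fun j => exists_least_of_exists
    ((mem_leaders.1 (leaderEmb_mem p j)).1.imp fun _ => p.symm')
  refine ⟨fun _ _ => eq_of_rel_leaderEmb p, g, fun j j' hjj' => ?_, hg⟩
  exact hp.lower_lt_of_upper_lt ((leaderEmb p).strictMono hjj')
    (fun h => hjj'.ne (eq_of_rel_leaderEmb p h)) (p.symm' (hg j).1) (p.symm' (hg j').1)

variable {ql : Setoid (Fin l ⊕ Fin t)} {qu : Setoid (Fin k ⊕ Fin t)}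

theorem eq_upperFactor_of_eq_scomp (hpe : p = scomp qu (sreflect ql))
    (hql : ∀ j j', ql (inr j) (inr j') → j = j') (hf : ∀ j, qu (inl (f j)) (inr j)) :
    qu = upperFactor p f := by
  subst hpe
  have hrep : ∀ a, qu a (inl (Sum.elim id f a)) := by
    rintro (i | j)
    · exact qu.refl' _
    · exact qu.symm' (hf j)
  ext a b
  exact (qu.rel_congr (hrep a) (hrep b)).trans (scomp_inl_inl_iff hql).symm

theorem rel_inl_inr_iff_of_eq_scomp (hpe : p = scomp qu (sreflect ql))
    (hqu : ∀ j j', qu (inr j) (inr j') → j = j') (hql : ∀ j j', ql (inr j) (inr j') → j = j')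
    (hf : ∀ j, qu (inl (f j)) (inr j)) {j : Fin t} {x : Fin l} :
    p (inl (f j)) (inr x) ↔ ql (inr j) (inl x) := by
  subst hpe
  rw [scomp_inl_inr_iff hql]
  refine ⟨fun ⟨j', hj', hj'x⟩ => ?_, fun h => ⟨j, hf j, h⟩⟩
  obtain rfl := hqu _ _ (qu.trans' (qu.symm' (hf j)) hj')
  exact hj'x

theorem eq_lowerFactor_of_eq_scomp (hpe : p = scomp qu (sreflect ql))
    (hqu : ∀ j j', qu (inr j) (inr j') → j = j') (hql : ∀ j j', ql (inr j) (inr j') → j = j')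
    (hf : ∀ j, qu (inl (f j)) (inr j)) : ql = lowerFactor p f := by
  have hmixed := fun {j x} => rel_inl_inr_iff_of_eq_scomp (j := j) (x := x) hpe hqu hql hf
  ext a b
  rcases a with x | j <;> rcases b with y | j'
  · rw [hpe]
    exact (scomp_inr_inr_iff (s := sreflect ql) hqu hql).symm
  · exact ql.comm'.trans (hmixed.symm.trans p.comm')
  · exact hmixed.symm
  · change ql (inr j) (inr j') ↔ upperFactor p f (inr j) (inr j')
    rw [← eq_upperFactor_of_eq_scomp hpe hql hf, Setoid.rel_inr_inr_iff hql,
      Setoid.rel_inr_inr_iff hqu]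

theorem mem_leaders_iff_of_eq_scomp (hpe : p = scomp qu (sreflect ql))
    (hql : ∀ j j', ql (inr j) (inr j') → j = j')
    (hf : ∀ j, qu (inl (f j)) (inr j) ∧ ∀ i, qu (inl i) (inr j) → f j ≤ i)
    (hconn : ∀ j, ∃ x, ql (inl x) (inr j)) {i : Fin k} : i ∈ leaders p ↔ ∃ j, f j = i := by
  subst hpe
  rw [mem_leaders]
  constructor
  · rintro ⟨⟨x, hx⟩, hmin⟩
    obtain ⟨j, hij, -⟩ := (scomp_inl_inr_iff hql).1 hx
    exact ⟨j, le_antisymm ((hf j).2 i hij)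
      (hmin _ ((scomp_inl_inl_iff hql).2 (qu.trans' (hf j).1 (qu.symm' hij))))⟩
  · rintro ⟨j, rfl⟩
    obtain ⟨x, hx⟩ := hconn j
    exact ⟨⟨x, (scomp_inl_inr_iff hql).2 ⟨j, (hf j).1, ql.symm' hx⟩⟩,
      fun i' hi' => (hf j).2 i' (qu.trans' ((scomp_inl_inl_iff hql).1 hi') (hf j).1)⟩

end Factors

/-- every noncrossing partition `p` of `k` upper and `l` lower
points admits a unique through-block decomposition `p = p_l* ∘ p_u` with `p_l`,
`p_u` building partitions. -/
theorem throughBlock_decomposition (k l : ℕ) (p : Setoid (Fin k ⊕ Fin l))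
    (hp : NonCrossingS p) :
    ∃! d : Σ t : ℕ, Setoid (Fin l ⊕ Fin t) × Setoid (Fin k ⊕ Fin t),
      IsBuilding d.2.1 ∧ IsBuilding d.2.2 ∧ p = scomp d.2.2 (sreflect d.2.1) := by
  refine ⟨⟨numThroughBlocks p, lowerFactor p (leaderEmb p), upperFactor p (leaderEmb p)⟩,
    ⟨isBuilding_lowerFactor_leaderEmb hp, isBuilding_upperFactor_leaderEmb p,
      eq_scomp_upperFactor_lowerFactor (fun _ _ => eq_of_rel_leaderEmb p)
        (fun _ _ => exists_rel_leaderEmb p)⟩, ?_⟩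
  rintro ⟨t, ql, qu⟩ (hd : IsBuilding ql ∧ IsBuilding qu ∧ p = scomp qu (sreflect ql))
  obtain ⟨⟨hql, g, -, hg⟩, ⟨hqu, f, hf_mono, hf⟩, hpe⟩ := hd
  have hconn : ∀ j, ∃ x, ql (inl x) (inr j) := fun j => ⟨g j, (hg j).1⟩
  have hf_rel : ∀ j, qu (inl (f j)) (inr j) := fun j => (hf j).1
  rw [eq_lowerFactor_of_eq_scomp hpe hqu hql hf_rel, eq_upperFactor_of_eq_scomp hpe hql hf_rel]
  obtain ⟨rfl, rfl⟩ := Finset.exists_card_eq_and_eq_orderEmbOfFin hf_mono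
    fun _ => mem_leaders_iff_of_eq_scomp hpe hql hf hconn
  rfl
end
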